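/- arXiv:math/0511536 — 5 statements merged into one kernel-verified Lean document; each statement's English description precedes it below -/
import Mathlib

section
/- Let a ∈ (0,1) be such that Λ((0,a]) > 0. Then there exist a constant C₁ ∈ (0,∞) (depending on Λ and a) and an integer b₀ such that for all b ≥ b₀: λ_b^a ≤ λ_b ≤ C₁ λ_b^a. -/
/-
For `x ∈ [0,1]`, `x ^ 2` times the integrand of `λ_b` is the probability that a binomial
`(b, x)` variable is at least `2`, namely `1 - (1 - x) ^ b - b x (1 - x) ^ (b - 1)`.
Being at most `1`, it bounds the integrand on `(a, 1]` by `1 / a ^ 2`, so that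
`λ_b - λ_b^a ≤ Λ((a, 1]) / a ^ 2`. It also tends to `1` uniformly on `[ε, 1]`, so for large
`b` the integrand exceeds `1 / 2` there and `λ_b^a ≥ Λ([ε, a]) / 2`, which is positive for
a suitable `ε > 0` since `Λ((0, a]) > 0`.
-/

open MeasureTheory Finset Filter

/-- `lamBK μ b k` is `λ_{b,k} = ∫_{[0,1]} x^{k-2} (1-x)^{b-k} dΛ(x)`. -/
noncomputable def lamBK (μ : Measure ℝ) (b k : ℕ) : ℝ :=
  ∫ x in Set.Icc (0:ℝ) 1, x ^ (k - 2) * (1 - x) ^ (b - k) ∂μ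

/-- `lamB μ b` is `λ_b = Σ_{k=2}^b C(b,k) λ_{b,k}`. -/
noncomputable def lamB (μ : Measure ℝ) (b : ℕ) : ℝ :=
  ∑ k ∈ Finset.Icc 2 b, (b.choose k : ℝ) * lamBK μ b k

/-- `gamB μ b` is `γ_b = Σ_{k=2}^b C(b,k) (k-1) λ_{b,k}`. -/
noncomputable def gamB (μ : Measure ℝ) (b : ℕ) : ℝ :=
  ∑ k ∈ Finset.Icc 2 b, (b.choose k : ℝ) * ((k : ℝ) - 1) * lamBK μ b k

noncomputable def lamBIntegrand (b : ℕ) (x : ℝ) : ℝ :=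
  ∑ k ∈ Icc 2 b, (b.choose k : ℝ) * (x ^ (k - 2) * (1 - x) ^ (b - k))

lemma continuous_lamBIntegrand (b : ℕ) : Continuous (lamBIntegrand b) := by
  unfold lamBIntegrand
  fun_prop

lemma lamBIntegrand_nonneg (b : ℕ) {x : ℝ} (hx : x ∈ Set.Icc (0 : ℝ) 1) :
    0 ≤ lamBIntegrand b x := by
  have hx0 : 0 ≤ x := hx.1
  have hx1 : 0 ≤ 1 - x := sub_nonneg.2 hx.2
  unfold lamBIntegrand
  positivity

lemma lamB_eq_integral (μ : Measure ℝ) [IsLocallyFiniteMeasure μ] (b : ℕ) :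
    lamB μ b = ∫ x in Set.Icc (0 : ℝ) 1, lamBIntegrand b x ∂μ := by
  unfold lamB lamBK lamBIntegrand
  rw [integral_finsetSum]
  · simp only [integral_const_mul]
  · intro k _
    apply Integrable.const_mul
    exact Continuous.integrableOn_Icc (by fun_prop)

lemma sq_mul_lamBIntegrand (b : ℕ) (x : ℝ) :
    x ^ 2 * lamBIntegrand b x =
      ∑ k ∈ Icc 2 b, (b.choose k : ℝ) * (x ^ k * (1 - x) ^ (b - k)) := by
  rw [lamBIntegrand, mul_sum]
  refine sum_congr rfl fun k hk => ?_
  rw [← Nat.add_sub_of_le (mem_Icc.1 hk).1, pow_add, Nat.add_sub_cancel_left]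
  ring

lemma sum_Icc_two_choose_mul_pow {b : ℕ} (hb : 2 ≤ b) (x : ℝ) :
    ∑ k ∈ Icc 2 b, (b.choose k : ℝ) * (x ^ k * (1 - x) ^ (b - k))
      = 1 - (1 - x) ^ b - b * x * (1 - x) ^ (b - 1) := by
  have hsum : ∑ k ∈ range (b + 1), (b.choose k : ℝ) * (x ^ k * (1 - x) ^ (b - k)) = 1 := by
    simpa [mul_comm, mul_left_comm] using (add_pow x (1 - x) b).symm
  rw [← sum_range_add_sum_Ico _ (by omega : 2 ≤ b + 1), Ico_add_one_right_eq_Icc,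
    sum_range_succ, sum_range_one] at hsum
  simp only [Nat.choose_zero_right, Nat.choose_one_right, pow_zero, pow_one, Nat.sub_zero] at hsum
  push_cast at hsum
  linarith

lemma sq_mul_lamBIntegrand_le_one (b : ℕ) {x : ℝ} (hx : x ∈ Set.Icc (0 : ℝ) 1) :
    x ^ 2 * lamBIntegrand b x ≤ 1 := by
  rcases lt_or_ge b 2 with hb | hb
  · simp [lamBIntegrand, Icc_eq_empty_of_lt hb]
  have hx0 : 0 ≤ x := hx.1
  have hx1 : 0 ≤ 1 - x := sub_nonneg.2 hx.2
  rw [sq_mul_lamBIntegrand, sum_Icc_two_choose_mul_pow hb]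
  have : 0 ≤ (b : ℝ) * x * (1 - x) ^ (b - 1) := by positivity
  have : 0 ≤ (1 - x) ^ b := by positivity
  linarith

lemma lamBIntegrand_le_of_le (b : ℕ) {a x : ℝ} (ha : 0 < a) (hax : a ≤ x) (hx : x ≤ 1) :
    lamBIntegrand b x ≤ 1 / a ^ 2 := by
  rw [le_div_iff₀ (by positivity), mul_comm]
  calc a ^ 2 * lamBIntegrand b x ≤ x ^ 2 * lamBIntegrand b x := by
        gcongr
        exact lamBIntegrand_nonneg b ⟨ha.le.trans hax, hx⟩
    _ ≤ 1 := sq_mul_lamBIntegrand_le_one b ⟨ha.le.trans hax, hx⟩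

lemma sub_le_sq_mul_lamBIntegrand {b : ℕ} (hb : 2 ≤ b) {ε x : ℝ} (hx : x ∈ Set.Icc ε 1) :
    1 - ((1 - ε) ^ b + b * (1 - ε) ^ (b - 1)) ≤ x ^ 2 * lamBIntegrand b x := by
  have h1x : 0 ≤ 1 - x := sub_nonneg.2 hx.2
  have hxε : 1 - x ≤ 1 - ε := by linarith [hx.1]
  rw [sq_mul_lamBIntegrand, sum_Icc_two_choose_mul_pow hb]
  have : x * (1 - x) ^ (b - 1) ≤ (1 - ε) ^ (b - 1) :=
    (mul_le_of_le_one_left (by positivity) hx.2).trans (by gcongr)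
  have : (1 - x) ^ b ≤ (1 - ε) ^ b := by gcongr
  have : (b : ℝ) * (x * (1 - x) ^ (b - 1)) ≤ b * (1 - ε) ^ (b - 1) := by gcongr
  linarith

lemma tendsto_pow_add_mul_pow_pred {r : ℝ} (h0 : 0 ≤ r) (h1 : r < 1) :
    Tendsto (fun b : ℕ => r ^ b + b * r ^ (b - 1)) atTop (nhds 0) := by
  rw [← tendsto_add_atTop_iff_nat 1]
  have hpow := tendsto_pow_atTop_nhds_zero_of_lt_one h0 h1
  have := (hpow.mul_const r).add ((tendsto_self_mul_const_pow_of_lt_one h0 h1).add hpow)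
  simp only [zero_mul, add_zero] at this
  refine this.congr fun b => ?_
  push_cast
  simp only [pow_succ]
  ring

lemma eventually_le_lamBIntegrand {ε c : ℝ} (hε0 : 0 < ε) (hε1 : ε ≤ 1) (hc : c < 1) :
    ∀ᶠ b in atTop, ∀ x ∈ Set.Icc ε 1, c ≤ lamBIntegrand b x := by
  have hsmall := (tendsto_pow_add_mul_pow_pred (sub_nonneg.2 hε1)
    (by linarith)).eventually_lt_const (sub_pos.2 hc)
  filter_upwards [hsmall, eventually_ge_atTop 2] with b hδ hb x hx
  have hx01 : x ∈ Set.Icc (0 : ℝ) 1 := ⟨hε0.le.trans hx.1, hx.2⟩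
  calc c ≤ 1 - ((1 - ε) ^ b + b * (1 - ε) ^ (b - 1)) := by linarith
    _ ≤ x ^ 2 * lamBIntegrand b x := sub_le_sq_mul_lamBIntegrand hb hx
    _ ≤ lamBIntegrand b x := by
        have : x ^ 2 ≤ 1 := pow_le_one₀ hx01.1 hx01.2
        exact mul_le_of_le_one_left (lamBIntegrand_nonneg b hx01) this

lemma exists_pos_measure_Icc_of_pos_measure_Ioc {μ : Measure ℝ} {a : ℝ}
    (h : 0 < μ (Set.Ioc 0 a)) : ∃ ε, 0 < ε ∧ 0 < μ (Set.Icc ε a) := by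
  have hcover : Set.Ioc 0 a ⊆ ⋃ n : ℕ, Set.Icc (1 / (n + 1 : ℝ)) a := fun x hx => by
    obtain ⟨n, hn⟩ := exists_nat_one_div_lt hx.1
    exact Set.mem_iUnion.2 ⟨n, hn.le, hx.2⟩
  obtain ⟨n, hn⟩ :=
    exists_measure_pos_of_not_measure_iUnion_null (h.trans_le (measure_mono hcover)).ne'
  exact ⟨_, Nat.one_div_pos_of_nat, hn⟩

section restrict

variable (μ : Measure ℝ) [IsLocallyFiniteMeasure μ] {a : ℝ}

lemma lamB_restrict_Icc_zero (ha : a ≤ 1) (b : ℕ) :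
    lamB (μ.restrict (Set.Icc 0 a)) b = ∫ x in Set.Icc 0 a, lamBIntegrand b x ∂μ := by
  rw [lamB_eq_integral, Measure.restrict_restrict measurableSet_Icc, Set.Icc_inter_Icc, max_self,
    min_eq_right ha]

lemma lamB_restrict_Icc_zero_le (ha : a ≤ 1) (b : ℕ) :
    lamB (μ.restrict (Set.Icc 0 a)) b ≤ lamB μ b := by
  rw [lamB_restrict_Icc_zero μ ha, lamB_eq_integral]
  exact setIntegral_mono_set (continuous_lamBIntegrand b).integrableOn_Icc
    ((ae_restrict_iff' measurableSet_Icc).2 (ae_of_all _ fun x hx => lamBIntegrand_nonneg b hx))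
    (Set.Icc_subset_Icc_right ha).eventuallyLE

lemma lamB_le_restrict_Icc_zero_add (ha0 : 0 < a) (ha1 : a ≤ 1) (b : ℕ) :
    lamB μ b ≤ lamB (μ.restrict (Set.Icc 0 a)) b + μ.real (Set.Ioc a 1) / a ^ 2 := by
  have hint : IntegrableOn (lamBIntegrand b) (Set.Icc 0 1) μ :=
    (continuous_lamBIntegrand b).integrableOn_Icc
  have htail : Set.Ioc a 1 ⊆ Set.Icc 0 1 :=
    Set.Ioc_subset_Icc_self.trans (Set.Icc_subset_Icc_left ha0.le)
  have hdisj : Disjoint (Set.Icc 0 a) (Set.Ioc a 1) :=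
    (Set.Iic_disjoint_Ioi le_rfl).mono Set.Icc_subset_Iic_self Set.Ioc_subset_Ioi_self
  rw [lamB_restrict_Icc_zero μ ha1, lamB_eq_integral, ← Set.Icc_union_Ioc_eq_Icc ha0.le ha1,
    setIntegral_union hdisj measurableSet_Ioc (hint.mono_set (Set.Icc_subset_Icc_right ha1))
      (hint.mono_set htail)]
  gcongr
  calc ∫ x in Set.Ioc a 1, lamBIntegrand b x ∂μ ≤ ∫ x in Set.Ioc a 1, 1 / a ^ 2 ∂μ :=
        setIntegral_mono_on (hint.mono_set htail) (integrableOn_const measure_Ioc_lt_top.ne)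
          measurableSet_Ioc fun x hx => lamBIntegrand_le_of_le b ha0 hx.1.le hx.2
    _ = μ.real (Set.Ioc a 1) / a ^ 2 := by rw [setIntegral_const, smul_eq_mul, mul_one_div]

lemma eventually_le_lamB_restrict_Icc_zero {ε c : ℝ} (hε : 0 < ε) (hεa : ε ≤ a)
    (ha : a ≤ 1) (hc : c < 1) :
    ∀ᶠ b in atTop, c * μ.real (Set.Icc ε a) ≤ lamB (μ.restrict (Set.Icc 0 a)) b := by
  filter_upwards [eventually_le_lamBIntegrand hε (hεa.trans ha) hc] with b hb
  have hint : IntegrableOn (lamBIntegrand b) (Set.Icc 0 a) μ :=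
    (continuous_lamBIntegrand b).integrableOn_Icc
  have hsub : Set.Icc ε a ⊆ Set.Icc 0 a := Set.Icc_subset_Icc_left hε.le
  rw [lamB_restrict_Icc_zero μ ha]
  calc c * μ.real (Set.Icc ε a) = ∫ x in Set.Icc ε a, c ∂μ := by
        rw [setIntegral_const, smul_eq_mul, mul_comm]
    _ ≤ ∫ x in Set.Icc ε a, lamBIntegrand b x ∂μ :=
        setIntegral_mono_on (integrableOn_const measure_Icc_lt_top.ne) (hint.mono_set hsub)
          measurableSet_Icc fun x hx => hb x ⟨hx.1, hx.2.trans ha⟩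
    _ ≤ ∫ x in Set.Icc 0 a, lamBIntegrand b x ∂μ :=
        setIntegral_mono_set hint ((ae_restrict_iff' measurableSet_Icc).2 (ae_of_all _
          fun x hx => lamBIntegrand_nonneg b ⟨hx.1, hx.2.trans ha⟩)) hsub.eventuallyLE

end restrict

theorem lamB_restrict_comparable_general (μ : Measure ℝ) [IsFiniteMeasure μ]
    (a : ℝ) (ha : a ∈ Set.Ioo (0:ℝ) 1) (haΛ : 0 < μ (Set.Ioc 0 a)) :
    ∃ C₁ : ℝ, 0 < C₁ ∧ ∃ b₀ : ℕ, ∀ b : ℕ, b₀ ≤ b →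
      lamB (μ.restrict (Set.Icc 0 a)) b ≤ lamB μ b ∧
        lamB μ b ≤ C₁ * lamB (μ.restrict (Set.Icc 0 a)) b := by
  obtain ⟨ha0, ha1⟩ := ha
  obtain ⟨ε, hε, hεmass⟩ := exists_pos_measure_Icc_of_pos_measure_Ioc haΛ
  have hεa : ε ≤ a := Set.nonempty_Icc.1 (nonempty_of_measure_ne_zero hεmass.ne')
  obtain ⟨b₀, hb₀⟩ := eventually_atTop.1
    (eventually_le_lamB_restrict_Icc_zero μ hε hεa ha1.le (c := 1 / 2) (by norm_num))
  set c := μ.real (Set.Icc ε a)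
  have hc : 0 < c := ENNReal.toReal_pos hεmass.ne' (measure_ne_top μ _)
  set M := μ.real (Set.Ioc a 1) / a ^ 2
  have hM : 0 ≤ M := by positivity
  refine ⟨1 + 2 * M / c, by positivity, b₀, fun b hb =>
    ⟨lamB_restrict_Icc_zero_le μ ha1.le b, ?_⟩⟩
  have hlower := hb₀ b hb
  have hupper := lamB_le_restrict_Icc_zero_add μ ha0 ha1.le b
  have : M ≤ 2 * M / c * lamB (μ.restrict (Set.Icc 0 a)) b := by
    rw [div_mul_eq_mul_div, le_div_iff₀ hc]
    nlinarith
  linarith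

theorem lamB_restrict_comparable (μ : Measure ℝ) [IsFiniteMeasure μ]
    (h0 : μ {0} = 0) (h1 : μ {1} = 0)
    (hsupp : μ ((Set.Icc (0:ℝ) 1)ᶜ) = 0) (hpos : 0 < μ (Set.Icc (0:ℝ) 1))
    (a : ℝ) (ha : a ∈ Set.Ioo (0:ℝ) 1) (haΛ : 0 < μ (Set.Ioc 0 a)) :
    ∃ C₁ : ℝ, 0 < C₁ ∧ ∃ b₀ : ℕ, ∀ b : ℕ, b₀ ≤ b →
      lamB (μ.restrict (Set.Icc 0 a)) b ≤ lamB μ b ∧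
        lamB μ b ≤ C₁ * lamB (μ.restrict (Set.Icc 0 a)) b :=
  lamB_restrict_comparable_general μ a ha haΛ
end

section
/- Assume ∫_{(0,1]} x^{-1} dΛ(x) = ∞. Then for every fixed a ∈ (0,1) there exist a constant C₃ ∈ (0,∞) (depending on Λ and a) and an integer b₀ such that for all b ≥ b₀: γ_b^a ≤ γ_b ≤ C₃ γ_b^a. -/
open MeasureTheory Finset Filter

/-!
Write `γ_b = ∫_{[0,1]} F_b dΛ` with `F_b(x) = Σ_k C(b,k)(k-1) x^{k-2}(1-x)^{b-k}`. The Bernstein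
identities give `x² F_b(x) = bx - 1 + (1-x)^b`, so `F_b(x) ≤ b/x`, and `F_b(x) ≥ b/(2x)` once
`bx ≥ 2`. Hence the part of `γ_b` coming from `(a,1]` is at most `Λ((a,1]) b/a`, while, as
`∫_{(0,a]} x⁻¹ dΛ = ∞`, one can pick `ε > 0` with `∫_{(ε,a]} x⁻¹ dΛ ≥ 2Λ((a,1])/a`, and then
`γ_b^a ≥ (b/2) ∫_{(ε,a]} x⁻¹ dΛ ≥ Λ((a,1]) b/a` for `b ≥ 2/ε`. So `γ_b ≤ 2 γ_b^a` eventually.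
-/

noncomputable def gamBDensity (b : ℕ) (x : ℝ) : ℝ :=
  ∑ k ∈ Icc 2 b, (b.choose k : ℝ) * ((k : ℝ) - 1) * (x ^ (k - 2) * (1 - x) ^ (b - k))

lemma sum_range_sub_one_mul_bernstein (b : ℕ) (x : ℝ) :
    ∑ k ∈ range (b + 1), ((k : ℝ) - 1) * ((b.choose k : ℝ) * x ^ k * (1 - x) ^ (b - k)) =
      b * x - 1 := by
  have hmean : ∑ k ∈ range (b + 1), (k : ℝ) * ((b.choose k : ℝ) * x ^ k * (1 - x) ^ (b - k)) =
      b * x := by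
    simpa [Polynomial.eval_finsetSum, bernsteinPolynomial] using
      congrArg (Polynomial.eval x) (bernsteinPolynomial.sum_smul ℝ b)
  have htotal : ∑ k ∈ range (b + 1), (b.choose k : ℝ) * x ^ k * (1 - x) ^ (b - k) = 1 := by
    simpa [Polynomial.eval_finsetSum, bernsteinPolynomial] using
      congrArg (Polynomial.eval x) (bernsteinPolynomial.sum ℝ b)
  simp only [sub_mul, one_mul, sum_sub_distrib, hmean, htotal]

lemma gamBDensity_mul_sq (b : ℕ) (x : ℝ) :
    gamBDensity b x * x ^ 2 = b * x - 1 + (1 - x) ^ b := by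
  rcases Nat.eq_zero_or_pos b with rfl | hb
  · simp [gamBDensity]
  have hterm : ∀ k ∈ Icc 2 b,
      (b.choose k : ℝ) * ((k : ℝ) - 1) * (x ^ (k - 2) * (1 - x) ^ (b - k)) * x ^ 2 =
        ((k : ℝ) - 1) * ((b.choose k : ℝ) * x ^ k * (1 - x) ^ (b - k)) := by
    intro k hk
    rw [← Nat.sub_add_cancel (mem_Icc.1 hk).1, pow_add]
    push_cast
    ring
  rw [gamBDensity, sum_mul, sum_congr rfl hterm, ← sum_range_sub_one_mul_bernstein,
    ← sum_range_add_sum_Ico _ (by omega : 2 ≤ b + 1), Finset.Ico_add_one_right_eq_Icc]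
  -- of the two extra terms, `k = 1` vanishes and `k = 0` is `-(1 - x) ^ b`
  simp [sum_range_succ]

lemma continuous_gamBDensity (b : ℕ) : Continuous (gamBDensity b) := by
  unfold gamBDensity
  fun_prop

lemma gamBDensity_nonneg (b : ℕ) {x : ℝ} (hx : x ∈ Set.Icc (0 : ℝ) 1) : 0 ≤ gamBDensity b x := by
  obtain ⟨hx0, hx1⟩ := hx
  refine sum_nonneg fun k hk => ?_
  have hk1 : (1 : ℝ) ≤ k := by exact_mod_cast (mem_Icc.1 hk).1.trans' one_le_two
  have h1x : 0 ≤ 1 - x := sub_nonneg.2 hx1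
  positivity

lemma gamBDensity_le (b : ℕ) {x : ℝ} (hx0 : 0 < x) (hx1 : x ≤ 1) :
    gamBDensity b x ≤ b * x⁻¹ := by
  have hpow : (1 - x) ^ b ≤ 1 := pow_le_one₀ (by linarith) (by linarith)
  have hsq := gamBDensity_mul_sq b x
  rw [← mul_le_mul_iff_left₀ (pow_pos hx0 2), hsq]
  field_simp
  linarith

lemma le_gamBDensity {b : ℕ} {x : ℝ} (hx0 : 0 < x) (hx1 : x ≤ 1) (hbx : 2 ≤ b * x) :
    b / 2 * x⁻¹ ≤ gamBDensity b x := by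
  have hpow : 0 ≤ (1 - x) ^ b := pow_nonneg (by linarith) b
  have hsq := gamBDensity_mul_sq b x
  rw [← mul_le_mul_iff_left₀ (pow_pos hx0 2), hsq]
  field_simp
  linarith

section

variable (μ : Measure ℝ) [IsLocallyFiniteMeasure μ]

lemma gamB_eq_setIntegral_gamBDensity (b : ℕ) :
    gamB μ b = ∫ x in Set.Icc (0 : ℝ) 1, gamBDensity b x ∂μ := by
  have hint : ∀ k ∈ Icc 2 b, IntegrableOn (fun x : ℝ => (b.choose k : ℝ) * ((k : ℝ) - 1) *
      (x ^ (k - 2) * (1 - x) ^ (b - k))) (Set.Icc 0 1) μ :=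
    fun k _ => Continuous.integrableOn_Icc (by fun_prop)
  simp only [gamB, gamBDensity, lamBK, integral_finsetSum _ hint, integral_const_mul]

lemma gamB_restrict_Icc {a : ℝ} (ha : a ≤ 1) (b : ℕ) :
    gamB (μ.restrict (Set.Icc 0 a)) b = ∫ x in Set.Icc (0 : ℝ) a, gamBDensity b x ∂μ := by
  rw [gamB_eq_setIntegral_gamBDensity, Measure.restrict_restrict measurableSet_Icc,
    Set.inter_eq_self_of_subset_right (Set.Icc_subset_Icc le_rfl ha)]

lemma gamB_eq_setIntegral_Icc_add_setIntegral_Ioc {a : ℝ} (ha0 : 0 ≤ a) (ha1 : a ≤ 1) (b : ℕ) :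
    gamB μ b = (∫ x in Set.Icc (0 : ℝ) a, gamBDensity b x ∂μ) +
      ∫ x in Set.Ioc a 1, gamBDensity b x ∂μ := by
  have hint := (continuous_gamBDensity b).integrableOn_Icc (μ := μ) (a := 0) (b := 1)
  rw [gamB_eq_setIntegral_gamBDensity, ← Set.Icc_union_Ioc_eq_Icc ha0 ha1]
  exact setIntegral_union
    ((Set.Iic_disjoint_Ioi le_rfl).mono Set.Icc_subset_Iic_self Set.Ioc_subset_Ioi_self)
    measurableSet_Ioc (hint.mono_set (Set.Icc_subset_Icc le_rfl ha1))
    (hint.mono_set (Set.Ioc_subset_Icc_self.trans (Set.Icc_subset_Icc ha0 le_rfl)))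

lemma setIntegral_Ioc_gamBDensity_le {a : ℝ} (ha : 0 < a) (b : ℕ) :
    ∫ x in Set.Ioc a 1, gamBDensity b x ∂μ ≤ μ.real (Set.Ioc a 1) * (b * a⁻¹) := by
  calc ∫ x in Set.Ioc a 1, gamBDensity b x ∂μ ≤ ∫ _ in Set.Ioc a 1, (b * a⁻¹ : ℝ) ∂μ :=
        setIntegral_mono_on
          (((continuous_gamBDensity b).integrableOn_Icc (a := a) (b := 1)).mono_set
            Set.Ioc_subset_Icc_self) (integrableOn_const measure_Ioc_lt_top.ne) measurableSet_Ioc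
          fun x hx => (gamBDensity_le b (ha.trans hx.1) hx.2).trans (by gcongr; exact hx.1.le)
    _ = μ.real (Set.Ioc a 1) * (b * a⁻¹) := by rw [setIntegral_const, smul_eq_mul]

lemma integrableOn_inv_Ioc {ε : ℝ} (hε : 0 < ε) (a : ℝ) :
    IntegrableOn (fun x : ℝ => x⁻¹) (Set.Ioc ε a) μ :=
  (ContinuousOn.integrableOn_Icc
    (continuousOn_inv₀.mono fun _ hx => (hε.trans_le hx.1).ne')).mono_set Set.Ioc_subset_Icc_self

lemma mul_setIntegral_inv_le_setIntegral_gamBDensity {ε a : ℝ} (hε : 0 < ε) (ha : a ≤ 1) {b : ℕ}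
    (hbε : 2 ≤ b * ε) :
    b / 2 * ∫ x in Set.Ioc ε a, x⁻¹ ∂μ ≤ ∫ x in Set.Icc (0 : ℝ) a, gamBDensity b x ∂μ := by
  have hint := (continuous_gamBDensity b).integrableOn_Icc (μ := μ) (a := 0) (b := a)
  calc b / 2 * ∫ x in Set.Ioc ε a, x⁻¹ ∂μ = ∫ x in Set.Ioc ε a, b / 2 * x⁻¹ ∂μ :=
        (integral_const_mul _ _).symm
    _ ≤ ∫ x in Set.Ioc ε a, gamBDensity b x ∂μ :=
        setIntegral_mono_on ((integrableOn_inv_Ioc μ hε a).const_mul _)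
          (hint.mono_set fun x hx => ⟨(hε.trans hx.1).le, hx.2⟩) measurableSet_Ioc fun x hx =>
            le_gamBDensity (hε.trans hx.1) (hx.2.trans ha) (hbε.trans (by gcongr; exact hx.1.le))
    _ ≤ ∫ x in Set.Icc (0 : ℝ) a, gamBDensity b x ∂μ :=
        setIntegral_mono_set hint
          ((ae_restrict_mem measurableSet_Icc).mono fun x hx =>
            gamBDensity_nonneg b ⟨hx.1, hx.2.trans ha⟩)
          (Eventually.of_forall fun x hx => ⟨(hε.trans hx.1).le, hx.2⟩)

lemma lintegral_inv_Ioc_eq_top {a : ℝ} (ha : 0 < a)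
    (hinf : ∫⁻ x in Set.Ioc 0 1, ENNReal.ofReal x⁻¹ ∂μ = ⊤) :
    ∫⁻ x in Set.Ioc 0 a, ENNReal.ofReal x⁻¹ ∂μ = ⊤ := by
  by_contra hfin
  refine (lt_top_iff_ne_top.1 ?_) hinf
  calc ∫⁻ x in Set.Ioc 0 1, ENNReal.ofReal x⁻¹ ∂μ
      ≤ ∫⁻ x in Set.Ioc 0 a ∪ Set.Ioc a 1, ENNReal.ofReal x⁻¹ ∂μ :=
        lintegral_mono_set Set.Ioc_subset_Ioc_union_Ioc
    _ ≤ _ + _ := lintegral_union_le _ _ _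
    _ < ⊤ := ENNReal.add_lt_top.2
        ⟨lt_top_iff_ne_top.2 hfin, (integrableOn_inv_Ioc μ ha 1).lintegral_lt_top⟩

lemma exists_pos_le_setIntegral_inv_Ioc {a : ℝ}
    (htop : ∫⁻ x in Set.Ioc 0 a, ENNReal.ofReal x⁻¹ ∂μ = ⊤) (T : ℝ) :
    ∃ ε > 0, T ≤ ∫ x in Set.Ioc ε a, x⁻¹ ∂μ := by
  set s : ℕ → Set ℝ := fun n => Set.Ioc (1 / (n + 1)) a
  have hmono : Monotone s := fun m n hmn =>
    Set.Ioc_subset_Ioc_left (Nat.one_div_le_one_div hmn)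
  have hunion : ⋃ n, s n = Set.Ioc 0 a := by
    ext x
    simp only [s, Set.mem_iUnion, Set.mem_Ioc]
    constructor
    · rintro ⟨n, hnx, hxa⟩
      exact ⟨Nat.one_div_pos_of_nat.trans hnx, hxa⟩
    · rintro ⟨hx, hxa⟩
      exact (exists_nat_one_div_lt hx).imp fun n hn => ⟨hn, hxa⟩
  have hlim := tendsto_measure_iUnion_atTop (μ := μ.withDensity fun x => ENNReal.ofReal x⁻¹) hmono
  rw [hunion, withDensity_apply _ measurableSet_Ioc, htop] at hlim
  obtain ⟨n, hn⟩ := (hlim.eventually (eventually_gt_nhds ENNReal.ofReal_lt_top)).exists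
  have hε : (0 : ℝ) < 1 / (n + 1) := Nat.one_div_pos_of_nat
  refine ⟨1 / (n + 1), hε, ?_⟩
  rw [Function.comp_apply, withDensity_apply _ measurableSet_Ioc,
    ← ofReal_integral_eq_lintegral_ofReal (integrableOn_inv_Ioc μ hε a)
      ((ae_restrict_mem measurableSet_Ioc).mono fun x hx => inv_nonneg.2 (hε.trans hx.1).le)] at hn
  exact (ENNReal.ofReal_lt_ofReal_iff'.1 hn).1.le

end

theorem gamB_restrict_comparable_of_integral_infinite_general (μ : Measure ℝ) [IsFiniteMeasure μ]
    (hinf : ∫⁻ x in Set.Ioc (0:ℝ) 1, ENNReal.ofReal (1 / x) ∂μ = ⊤) :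
    ∀ a : ℝ, a ∈ Set.Ioo (0:ℝ) 1 →
      ∃ C₃ : ℝ, 0 < C₃ ∧ ∃ b₀ : ℕ, ∀ b : ℕ, b₀ ≤ b →
        gamB (μ.restrict (Set.Icc 0 a)) b ≤ gamB μ b ∧
          gamB μ b ≤ C₃ * gamB (μ.restrict (Set.Icc 0 a)) b := by
  rintro a ⟨ha0, ha1⟩
  simp only [one_div] at hinf
  obtain ⟨ε, hε, hI⟩ := exists_pos_le_setIntegral_inv_Ioc μ (lintegral_inv_Ioc_eq_top μ ha0 hinf)
    (2 * (μ.real (Set.Ioc a 1) * a⁻¹))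
  refine ⟨2, two_pos, ⌈2 / ε⌉₊, fun b hb => ?_⟩
  have hbε : 2 ≤ b * ε := (div_le_iff₀ hε).1 (Nat.ceil_le.1 hb)
  have hhead := mul_setIntegral_inv_le_setIntegral_gamBDensity μ hε ha1.le hbε
  have htail := setIntegral_Ioc_gamBDensity_le μ ha0 b
  have htail_nonneg : 0 ≤ ∫ x in Set.Ioc a 1, gamBDensity b x ∂μ :=
    setIntegral_nonneg measurableSet_Ioc fun x hx =>
      gamBDensity_nonneg b ⟨(ha0.trans hx.1).le, hx.2⟩
  have htail_le_head :
      μ.real (Set.Ioc a 1) * (b * a⁻¹) ≤ b / 2 * ∫ x in Set.Ioc ε a, x⁻¹ ∂μ :=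
    calc μ.real (Set.Ioc a 1) * (b * a⁻¹) = b / 2 * (2 * (μ.real (Set.Ioc a 1) * a⁻¹)) := by ring
      _ ≤ _ := by gcongr
  rw [gamB_restrict_Icc μ ha1.le, gamB_eq_setIntegral_Icc_add_setIntegral_Ioc μ ha0.le ha1.le]
  constructor <;> linarith

theorem gamB_restrict_comparable_of_integral_infinite (μ : Measure ℝ) [IsFiniteMeasure μ]
    (h0 : μ {0} = 0) (h1 : μ {1} = 0)
    (hsupp : μ ((Set.Icc (0:ℝ) 1)ᶜ) = 0) (hpos : 0 < μ (Set.Icc (0:ℝ) 1))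
    (hinf : ∫⁻ x in Set.Ioc (0:ℝ) 1, ENNReal.ofReal (1 / x) ∂μ = ⊤) :
    ∀ a : ℝ, a ∈ Set.Ioo (0:ℝ) 1 →
      ∃ C₃ : ℝ, 0 < C₃ ∧ ∃ b₀ : ℕ, ∀ b : ℕ, b₀ ≤ b →
        gamB (μ.restrict (Set.Icc 0 a)) b ≤ gamB μ b ∧
          gamB μ b ≤ C₃ * gamB (μ.restrict (Set.Icc 0 a)) b :=
  gamB_restrict_comparable_of_integral_infinite_general μ hinf
end

section
/- There exist constants 0 < c ≤ C < ∞ (depending on Λ) and an integer b₀ such that for all b ≥ b₀: c ( b² Λ([0,1/b]) + b ∫_{[1/b,1]} x^{-1} dΛ(x) ) ≤ γ_b ≤ C ( b² Λ([0,1/b]) + b ∫_{[1/b,1]} x^{-1} dΛ(x) ). -/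
open MeasureTheory Finset Filter

/-!
Write `γ_b = ∫ F_b dΛ` with `F_b(x) = Σ_k C(b,k) (k-1) x^(k-2) (1-x)^(b-k)`. The first two
moments of the Bernstein basis give `x² F_b(x) = (1-x)^b - 1 + b x`, and the geometric series
turns this into `F_b(x) = Σ_{j<b} Σ_{i<j} (1-x)^i`. So `F_b` is nonnegative and decreasing on
`[0,1]`, at most `min(b², b/x)`, at least `b²/4` on `[0, 2/b]` (evaluate the identity at `2/b`)
and at least `b/(2x)` beyond `2/b`. Hence `F_b` agrees up to a factor `8` with `b²` on `[0,1/b]`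
plus `b/x` on `[1/b,1]`, whose integral is the bracket in the statement.
-/

noncomputable def gamBKernel (b : ℕ) (x : ℝ) : ℝ :=
  ∑ k ∈ Icc 2 b, (b.choose k : ℝ) * ((k : ℝ) - 1) * (x ^ (k - 2) * (1 - x) ^ (b - k))

def nestedGeomSum (b : ℕ) (x : ℝ) : ℝ :=
  ∑ j ∈ range b, ∑ i ∈ range j, (1 - x) ^ i

open Polynomial in
theorem sum_choose_mul_sub_one_mul_pow (b : ℕ) (x : ℝ) :
    ∑ k ∈ range (b + 1), (b.choose k : ℝ) * ((k : ℝ) - 1) * (x ^ k * (1 - x) ^ (b - k))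
      = b * x - 1 := by
  have hmean := congrArg (eval x) (bernsteinPolynomial.sum_smul ℝ b)
  have htotal := congrArg (eval x) (bernsteinPolynomial.sum ℝ b)
  simp only [eval_finsetSum, eval_one, eval_X, bernsteinPolynomial, eval_mul, eval_pow,
    eval_sub, eval_natCast, nsmul_eq_mul] at hmean htotal
  calc _ = ∑ k ∈ range (b + 1), (k * ((b.choose k : ℝ) * x ^ k * (1 - x) ^ (b - k))
        - (b.choose k : ℝ) * x ^ k * (1 - x) ^ (b - k)) := sum_congr rfl fun k _ => by ring
    _ = b * x - 1 := by rw [sum_sub_distrib, hmean, htotal]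

theorem sq_mul_gamBKernel {b : ℕ} (hb : 1 ≤ b) (x : ℝ) :
    x ^ 2 * gamBKernel b x = (1 - x) ^ b - 1 + b * x := by
  have hsplit := sum_range_add_sum_Ico
    (fun k => (b.choose k : ℝ) * ((k : ℝ) - 1) * (x ^ k * (1 - x) ^ (b - k)))
    (show 2 ≤ b + 1 by omega)
  rw [sum_choose_mul_sub_one_mul_pow, Finset.Ico_add_one_right_eq_Icc, sum_range_succ,
    sum_range_one] at hsplit
  -- the terms `k = 0` and `k = 1` of the full sum are `-(1 - x) ^ b` and `0`
  norm_num at hsplit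
  rw [gamBKernel, mul_sum]
  have hshift : ∀ k ∈ Icc 2 b,
      x ^ 2 * ((b.choose k : ℝ) * ((k : ℝ) - 1) * (x ^ (k - 2) * (1 - x) ^ (b - k)))
        = (b.choose k : ℝ) * ((k : ℝ) - 1) * (x ^ k * (1 - x) ^ (b - k)) := by
    intro k hk
    rw [← pow_sub_mul_pow x (mem_Icc.mp hk).1]
    ring
  rw [sum_congr rfl hshift]
  linarith

theorem sq_mul_nestedGeomSum (b : ℕ) (x : ℝ) :
    x ^ 2 * nestedGeomSum b x = (1 - x) ^ b - 1 + b * x := by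
  induction b with
  | zero => simp [nestedGeomSum]
  | succ b ih =>
    have hgeom := geom_sum_mul_neg (1 - x) b
    rw [sub_sub_cancel] at hgeom
    rw [nestedGeomSum, sum_range_succ, ← nestedGeomSum]
    push_cast
    linear_combination ih + x * hgeom

theorem continuous_gamBKernel (b : ℕ) : Continuous (gamBKernel b) := by
  unfold gamBKernel; fun_prop

theorem continuous_nestedGeomSum (b : ℕ) : Continuous (nestedGeomSum b) := by
  unfold nestedGeomSum; fun_prop

theorem gamBKernel_eq_nestedGeomSum {b : ℕ} (hb : 1 ≤ b) : gamBKernel b = nestedGeomSum b := by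
  refine (continuous_gamBKernel b).ext_on (dense_compl_singleton 0)
    (continuous_nestedGeomSum b) fun x hx => ?_
  have hx2 : x ^ 2 ≠ 0 := pow_ne_zero 2 hx
  exact mul_left_cancel₀ hx2 ((sq_mul_gamBKernel hb x).trans (sq_mul_nestedGeomSum b x).symm)

section Bounds

variable {b : ℕ} {x : ℝ}

theorem nestedGeomSum_nonneg (hx : x ≤ 1) : 0 ≤ nestedGeomSum b x :=
  sum_nonneg fun _ _ => sum_nonneg fun _ _ => pow_nonneg (by linarith) _

theorem nestedGeomSum_le_sq (hx0 : 0 ≤ x) (hx1 : x ≤ 1) : nestedGeomSum b x ≤ b ^ 2 := by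
  calc nestedGeomSum b x ≤ ∑ _j ∈ range b, ∑ _i ∈ range b, (1 : ℝ) := by
        refine sum_le_sum fun j hj => ?_
        calc ∑ i ∈ range j, (1 - x) ^ i ≤ ∑ i ∈ range j, (1 : ℝ) :=
              sum_le_sum fun i _ => pow_le_one₀ (by linarith) (by linarith)
          _ ≤ ∑ i ∈ range b, (1 : ℝ) :=
              sum_le_sum_of_subset_of_nonneg (range_subset_range.mpr (mem_range.mp hj).le)
                fun _ _ _ => zero_le_one
    _ = b ^ 2 := by simp [sq]

theorem nestedGeomSum_le_div (hx0 : 0 < x) (hx1 : x ≤ 1) : nestedGeomSum b x ≤ b / x := by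
  have hpow : (1 - x) ^ b ≤ 1 := pow_le_one₀ (by linarith) (by linarith)
  rw [le_div_iff₀ hx0, ← mul_le_mul_iff_of_pos_left hx0]
  nlinarith [sq_mul_nestedGeomSum b x]

theorem antitoneOn_nestedGeomSum (b : ℕ) : AntitoneOn (nestedGeomSum b) (Set.Iic 1) :=
  fun x _ y hy hxy => sum_le_sum fun _ _ => sum_le_sum fun _ _ =>
    pow_le_pow_left₀ (sub_nonneg.mpr hy) (by linarith) _

theorem sq_le_four_mul_nestedGeomSum (hb : 2 ≤ b) (hx : x ≤ 2 / b) :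
    (b : ℝ) ^ 2 ≤ 4 * nestedGeomSum b x := by
  have hb0 : (0 : ℝ) < b := by positivity
  have htwo : 2 / (b : ℝ) ≤ 1 := by
    rw [div_le_one hb0]; exact_mod_cast hb
  -- at `x = 2 / b` the right side of `sq_mul_nestedGeomSum` is `(1 - x) ^ b + 1 ≥ 1`
  have hat : (b : ℝ) ^ 2 ≤ 4 * nestedGeomSum b (2 / b) := by
    have hid := sq_mul_nestedGeomSum b (2 / b)
    have hpow : 0 ≤ (1 - 2 / (b : ℝ)) ^ b := pow_nonneg (by linarith) _
    have hb2 : (b : ℝ) * (2 / b) = 2 := by field_simp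
    have hone : 1 ≤ (2 / (b : ℝ)) ^ 2 * nestedGeomSum b (2 / b) := by linarith
    calc (b : ℝ) ^ 2 ≤ (b : ℝ) ^ 2 * ((2 / (b : ℝ)) ^ 2 * nestedGeomSum b (2 / b)) :=
          le_mul_of_one_le_right (by positivity) hone
      _ = 4 * nestedGeomSum b (2 / b) := by field_simp; ring
  linarith [antitoneOn_nestedGeomSum b (hx.trans htwo) htwo hx]

theorem div_le_four_mul_nestedGeomSum (hb : 2 ≤ b) (hx0 : 1 / b ≤ x) (hx1 : x ≤ 1) :
    b / x ≤ 4 * nestedGeomSum b x := by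
  have hb0 : (0 : ℝ) < b := by positivity
  have hx : 0 < x := (by positivity : (0 : ℝ) < 1 / b).trans_le hx0
  have hbx : 1 ≤ b * x := by rwa [div_le_iff₀ hb0, mul_comm] at hx0
  rcases le_total x (2 / b) with hsmall | hlarge
  · refine le_trans ?_ (sq_le_four_mul_nestedGeomSum hb hsmall)
    rw [div_le_iff₀ hx]
    nlinarith
  · have hbx2 : 2 ≤ b * x := by rwa [div_le_iff₀ hb0, mul_comm] at hlarge
    have hpow : 0 ≤ (1 - x) ^ b := pow_nonneg (by linarith) _
    rw [div_le_iff₀ hx, ← mul_le_mul_iff_of_pos_left hx]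
    nlinarith [sq_mul_nestedGeomSum b x]

end Bounds

noncomputable def gamBScale (b : ℕ) (x : ℝ) : ℝ :=
  (Set.Icc 0 (1 / (b : ℝ))).indicator (fun _ => (b : ℝ) ^ 2) x
    + (Set.Icc (1 / (b : ℝ)) 1).indicator (fun t => b / t) x

section Scale

variable {b : ℕ} {x : ℝ}

theorem nestedGeomSum_le_gamBScale (hx : x ∈ Set.Icc 0 1) :
    nestedGeomSum b x ≤ gamBScale b x := by
  have hb : (0 : ℝ) ≤ 1 / b := by positivity
  rcases le_or_gt x (1 / b) with hsmall | hlarge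
  · have hfirst : (Set.Icc 0 (1 / (b : ℝ))).indicator (fun _ => (b : ℝ) ^ 2) x = b ^ 2 :=
      Set.indicator_of_mem (Set.mem_Icc.mpr ⟨hx.1, hsmall⟩) _
    have hsecond : 0 ≤ (Set.Icc (1 / (b : ℝ)) 1).indicator (fun t => b / t) x :=
      Set.indicator_nonneg (fun t ht => div_nonneg (Nat.cast_nonneg b) (hb.trans ht.1)) x
    rw [gamBScale, hfirst]
    linarith [nestedGeomSum_le_sq (b := b) hx.1 hx.2]
  · have hfirst : (Set.Icc 0 (1 / (b : ℝ))).indicator (fun _ => (b : ℝ) ^ 2) x = 0 :=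
      Set.indicator_of_notMem (fun h => h.2.not_gt hlarge) _
    have hsecond : (Set.Icc (1 / (b : ℝ)) 1).indicator (fun t => b / t) x = b / x :=
      Set.indicator_of_mem (Set.mem_Icc.mpr ⟨hlarge.le, hx.2⟩) _
    rw [gamBScale, hfirst, hsecond, zero_add]
    exact nestedGeomSum_le_div (hb.trans_lt hlarge) hx.2

theorem gamBScale_le_eight_mul_nestedGeomSum (hb : 2 ≤ b) (hx : x ∈ Set.Icc 0 1) :
    gamBScale b x ≤ 8 * nestedGeomSum b x := by
  have hG := nestedGeomSum_nonneg (b := b) hx.2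
  have hfirst : (Set.Icc 0 (1 / (b : ℝ))).indicator (fun _ => (b : ℝ) ^ 2) x
      ≤ 4 * nestedGeomSum b x := by
    refine Set.indicator_apply_le' (fun h => ?_) fun _ => by linarith
    exact sq_le_four_mul_nestedGeomSum hb
      (h.2.trans (div_le_div_of_nonneg_right one_le_two (Nat.cast_nonneg b)))
  have hsecond : (Set.Icc (1 / (b : ℝ)) 1).indicator (fun t => b / t) x
      ≤ 4 * nestedGeomSum b x := by
    refine Set.indicator_apply_le' (fun h => ?_) fun _ => by linarith
    exact div_le_four_mul_nestedGeomSum hb h.1 h.2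
  rw [gamBScale]
  linarith

end Scale

section Integrals

variable (μ : Measure ℝ) [IsFiniteMeasure μ] {b : ℕ}

theorem gamB_eq_setIntegral_gamBKernel (b : ℕ) :
    gamB μ b = ∫ x in Set.Icc 0 1, gamBKernel b x ∂μ := by
  unfold gamB lamBK gamBKernel
  rw [integral_finsetSum _ fun k _ => (by fun_prop : Continuous _).integrableOn_Icc]
  exact sum_congr rfl fun k _ => (integral_const_mul _ _).symm

theorem integrable_indicator_Icc_div (hb : 1 ≤ b) :
    Integrable ((Set.Icc (1 / (b : ℝ)) 1).indicator fun x => b / x) μ := by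
  have hb0 : (0 : ℝ) < 1 / b := by positivity
  exact (ContinuousOn.integrableOn_Icc (continuousOn_const.div continuousOn_id
    fun x hx => (hb0.trans_le hx.1).ne')).integrable_indicator measurableSet_Icc

theorem integrable_indicator_Icc_sq (b : ℕ) :
    Integrable ((Set.Icc 0 (1 / (b : ℝ))).indicator fun _ => (b : ℝ) ^ 2) μ :=
  (integrableOn_const (measure_ne_top _ _)).integrable_indicator measurableSet_Icc

theorem integrableOn_gamBScale (hb : 1 ≤ b) : IntegrableOn (gamBScale b) (Set.Icc 0 1) μ :=
  ((integrable_indicator_Icc_sq μ b).add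
    (integrable_indicator_Icc_div μ hb)).integrableOn

theorem setIntegral_gamBScale (hb : 1 ≤ b) :
    ∫ x in Set.Icc 0 1, gamBScale b x ∂μ
      = b ^ 2 * μ.real (Set.Icc 0 (1 / b)) + b * ∫ x in Set.Icc (1 / (b : ℝ)) 1, 1 / x ∂μ := by
  have hinv : 1 / (b : ℝ) ≤ 1 := by
    rw [div_le_one (by positivity)]; exact_mod_cast hb
  simp only [gamBScale]
  rw [integral_add (integrable_indicator_Icc_sq μ b).integrableOn
      (integrable_indicator_Icc_div μ hb).integrableOn,
    setIntegral_indicator measurableSet_Icc, setIntegral_indicator measurableSet_Icc,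
    Set.inter_eq_right.mpr (Set.Icc_subset_Icc le_rfl hinv),
    Set.inter_eq_right.mpr (Set.Icc_subset_Icc (by positivity) le_rfl),
    setIntegral_const, smul_eq_mul, mul_comm, ← integral_const_mul]
  simp only [mul_one_div]

end Integrals

theorem gamB_asymp_general (μ : Measure ℝ) [IsFiniteMeasure μ] :
    ∃ c C : ℝ, 0 < c ∧ c ≤ C ∧ ∃ b₀ : ℕ, ∀ b : ℕ, b₀ ≤ b →
      c * ((b : ℝ) ^ 2 * (μ (Set.Icc (0:ℝ) (1 / b))).toReal
            + (b : ℝ) * ∫ x in Set.Icc (1 / (b:ℝ)) 1, 1 / x ∂μ)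
          ≤ gamB μ b ∧
        gamB μ b ≤ C * ((b : ℝ) ^ 2 * (μ (Set.Icc (0:ℝ) (1 / b))).toReal
            + (b : ℝ) * ∫ x in Set.Icc (1 / (b:ℝ)) 1, 1 / x ∂μ) := by
  refine ⟨1 / 8, 1, by norm_num, by norm_num, 2, fun b hb => ?_⟩
  have hG : IntegrableOn (nestedGeomSum b) (Set.Icc 0 1) μ :=
    (continuous_nestedGeomSum b).integrableOn_Icc
  have hS := integrableOn_gamBScale μ (b := b) (by omega)
  rw [← measureReal_def, ← setIntegral_gamBScale μ (by omega), gamB_eq_setIntegral_gamBKernel,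
    gamBKernel_eq_nestedGeomSum (by omega), ← integral_const_mul, one_mul]
  constructor
  · refine setIntegral_mono_on (hS.const_mul _) hG measurableSet_Icc fun x hx => ?_
    linarith [gamBScale_le_eight_mul_nestedGeomSum hb hx]
  · exact setIntegral_mono_on hG hS measurableSet_Icc fun x hx => nestedGeomSum_le_gamBScale hx

theorem gamB_asymp (μ : Measure ℝ) [IsFiniteMeasure μ]
    (h0 : μ {0} = 0) (h1 : μ {1} = 0)
    (hsupp : μ ((Set.Icc (0:ℝ) 1)ᶜ) = 0) (hpos : 0 < μ (Set.Icc (0:ℝ) 1)) :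
    ∃ c C : ℝ, 0 < c ∧ c ≤ C ∧ ∃ b₀ : ℕ, ∀ b : ℕ, b₀ ≤ b →
      c * ((b : ℝ) ^ 2 * (μ (Set.Icc (0:ℝ) (1 / b))).toReal
            + (b : ℝ) * ∫ x in Set.Icc (1 / (b:ℝ)) 1, 1 / x ∂μ)
          ≤ gamB μ b ∧
        gamB μ b ≤ C * ((b : ℝ) ^ 2 * (μ (Set.Icc (0:ℝ) (1 / b))).toReal
            + (b : ℝ) * ∫ x in Set.Icc (1 / (b:ℝ)) 1, 1 / x ∂μ) :=
  gamB_asymp_general μ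
end

section
/- If λ_b → ∞ as b → ∞, then λ_{b+1}/λ_b → 1 as b → ∞. -/
open MeasureTheory Finset Filter

section Aux
set_option linter.unusedSectionVars false

/-- The integrand of `lamB` as a function of `x`. -/
noncomputable def Sfun (b : ℕ) (x : ℝ) : ℝ :=
  ∑ k ∈ Icc 2 b, (b.choose k : ℝ) * (x^(k-2) * (1-x)^(b-k))

/-- `∫ (1-x)^n` over `[0,1]`. -/
noncomputable def Ipow (μ : Measure ℝ) (n : ℕ) : ℝ :=
  ∫ x in Set.Icc (0:ℝ) 1, (1 - x)^n ∂μ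

lemma sum_binom (b : ℕ) (x : ℝ) :
    ∑ k ∈ Icc 2 b, (b.choose k : ℝ) * (x^k * (1-x)^(b-k))
      = 1 - (1-x)^b - b*x*(1-x)^(b-1) := by
  rcases Nat.eq_zero_or_pos b with rfl | hb
  · simp
  have h := add_pow x (1-x) b
  have hr : Finset.range (b+1) = insert 0 (insert 1 (Icc 2 b)) := by
    ext k; simp only [Finset.mem_range, Finset.mem_insert, Finset.mem_Icc]; omega
  rw [hr, Finset.sum_insert (by simp), Finset.sum_insert (by simp)] at h
  simp only [pow_zero, pow_one, one_mul, Nat.sub_zero, Nat.choose_zero_right,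
    Nat.choose_one_right, Nat.cast_one, mul_one, add_sub_cancel, one_pow] at h
  have : ∑ k ∈ Icc 2 b, (b.choose k : ℝ) * (x^k * (1-x)^(b-k))
      = ∑ k ∈ Icc 2 b, x^k * (1-x)^(b-k) * (b.choose k : ℝ) := by
    apply Finset.sum_congr rfl; intro k hk; ring
  rw [this]; linarith [h]

lemma sq_mul_S (b : ℕ) (x : ℝ) :
    x^2 * Sfun b x = 1 - (1-x)^b - b*x*(1-x)^(b-1) := by
  rw [← sum_binom b x, Sfun, Finset.mul_sum]
  apply Finset.sum_congr rfl
  intro k hk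
  rw [Finset.mem_Icc] at hk
  have : x^2 * x^(k-2) = x^k := by
    rw [← pow_add]; congr 1; omega
  calc x^2 * ((b.choose k : ℝ) * (x^(k-2) * (1-x)^(b-k)))
      = (b.choose k : ℝ) * ((x^2 * x^(k-2)) * (1-x)^(b-k)) := by ring
    _ = _ := by rw [this]

lemma Sdiff (m : ℕ) (x : ℝ) (hx : x ≠ 0) :
    Sfun (m+2) x - Sfun (m+1) x = (m+1 : ℝ) * (1-x)^m := by
  have h2 : (x^2 : ℝ) ≠ 0 := pow_ne_zero 2 hx
  apply mul_left_cancel₀ h2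
  have e1 := sq_mul_S (m+2) x
  have e2 := sq_mul_S (m+1) x
  have h1 : (1-x)^(m+2) = (1-x)^m * (1-x) * (1-x) := by ring
  have h2' : (1-x)^(m+1) = (1-x)^m * (1-x) := by ring
  have r1 : m + 2 - 1 = m + 1 := by omega
  have r2 : m + 1 - 1 = m := by omega
  rw [mul_sub, e1, e2, r1, r2]
  push_cast
  rw [h1, h2']
  ring

variable (μ : Measure ℝ) [IsFiniteMeasure μ]

lemma term_integrable (b k : ℕ) :
    IntegrableOn (fun x : ℝ => (b.choose k : ℝ) * (x^(k-2) * (1-x)^(b-k)))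
      (Set.Icc (0:ℝ) 1) μ := by
  apply Continuous.integrableOn_Icc
  continuity

lemma S_integrable (b : ℕ) : IntegrableOn (Sfun b) (Set.Icc (0:ℝ) 1) μ := by
  unfold Sfun
  exact integrable_finset_sum _ (fun k _ => term_integrable μ b k)

lemma lamB_eq (b : ℕ) : lamB μ b = ∫ x in Set.Icc (0:ℝ) 1, Sfun b x ∂μ := by
  unfold lamB Sfun
  rw [integral_finset_sum _ (fun k _ => term_integrable μ b k)]
  apply Finset.sum_congr rfl
  intro k _
  rw [lamBK, ← MeasureTheory.integral_const_mul]

lemma Ipow_nonneg (n : ℕ) : 0 ≤ Ipow μ n := by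
  apply setIntegral_nonneg measurableSet_Icc
  intro x hx
  exact pow_nonneg (by linarith [hx.2]) n

lemma Ipow_mono {m n : ℕ} (h : m ≤ n) : Ipow μ n ≤ Ipow μ m := by
  apply setIntegral_mono_on
  · exact (by continuity : Continuous fun x : ℝ => (1-x)^n).integrableOn_Icc
  · exact (by continuity : Continuous fun x : ℝ => (1-x)^m).integrableOn_Icc
  · exact measurableSet_Icc
  · intro x hx
    exact pow_le_pow_of_le_one (by linarith [hx.2]) (by linarith [hx.1]) h

lemma lamB_diff (h0 : μ {0} = 0) (m : ℕ) :
    lamB μ (m+2) - lamB μ (m+1) = (m+1 : ℝ) * Ipow μ m := by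
  rw [lamB_eq, lamB_eq,
    ← integral_sub (S_integrable μ (m+2)) (S_integrable μ (m+1))]
  have hae : ∀ᵐ x ∂(μ.restrict (Set.Icc (0:ℝ) 1)),
      Sfun (m+2) x - Sfun (m+1) x = (m+1 : ℝ) * (1-x)^m := by
    apply ae_restrict_of_ae
    rw [ae_iff]
    refine measure_mono_null ?_ h0
    intro x hx
    simp only [Set.mem_setOf_eq] at hx
    simp only [Set.mem_singleton_iff]
    by_contra hne
    exact hx (Sdiff m x hne)
  rw [integral_congr_ae hae, MeasureTheory.integral_const_mul, Ipow]

lemma lamBK_nonneg (b k : ℕ) : 0 ≤ lamBK μ b k := by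
  apply setIntegral_nonneg measurableSet_Icc
  intro x hx
  exact mul_nonneg (pow_nonneg hx.1 _) (pow_nonneg (by linarith [hx.2]) _)

lemma lamB_lower (b : ℕ) (hb : 2 ≤ b) :
    (b.choose 2 : ℝ) * Ipow μ (b-2) ≤ lamB μ b := by
  have h2 : lamBK μ b 2 = Ipow μ (b-2) := by
    unfold lamBK Ipow
    apply integral_congr_ae
    filter_upwards with x
    simp
  rw [← h2]
  apply Finset.single_le_sum (f := fun k => (b.choose k : ℝ) * lamBK μ b k)
  · intro k _
    exact mul_nonneg (Nat.cast_nonneg _) (lamBK_nonneg μ b k)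
  · rw [Finset.mem_Icc]; omega

end Aux

theorem lamB_ratio_tendsto_one (μ : Measure ℝ) [IsFiniteMeasure μ]
    (h0 : μ {0} = 0) (h1 : μ {1} = 0)
    (hsupp : μ ((Set.Icc (0:ℝ) 1)ᶜ) = 0) (hpos : 0 < μ (Set.Icc (0:ℝ) 1))
    (hlam : Tendsto (fun b : ℕ => lamB μ b) atTop atTop) :
    Tendsto (fun b : ℕ => lamB μ (b + 1) / lamB μ b) atTop (nhds 1) := by
  have hupper : Tendsto (fun b : ℕ => 1 + 2 / ((b:ℝ) - 1)) atTop (nhds 1) := by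
    have : Tendsto (fun b : ℕ => 2 / ((b:ℝ) - 1)) atTop (nhds 0) :=
      Tendsto.div_atTop tendsto_const_nhds
        (tendsto_atTop_add_const_right _ (-1)
          tendsto_natCast_atTop_atTop)
    simpa using tendsto_const_nhds.add this
  have hev : ∀ᶠ b : ℕ in atTop, 1 ≤ lamB μ b ∧ 2 ≤ b := by
    filter_upwards [hlam.eventually_ge_atTop 1, eventually_ge_atTop 2] with b hb hb2
    exact ⟨hb, hb2⟩
  apply tendsto_of_tendsto_of_tendsto_of_le_of_le' tendsto_const_nhds hupper
  · -- 1 ≤ ratio eventually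
    filter_upwards [hev] with b hb
    obtain ⟨hpos', hb2⟩ := hb
    obtain ⟨m, rfl⟩ : ∃ m, b = m + 1 := ⟨b - 1, by omega⟩
    have hdiff := lamB_diff μ h0 m
    have hnn : (0:ℝ) ≤ (m+1 : ℝ) * Ipow μ m :=
      mul_nonneg (by positivity) (Ipow_nonneg μ m)
    rw [le_div_iff₀ (by linarith : (0:ℝ) < lamB μ (m+1))]
    linarith
  · -- ratio ≤ 1 + 2/(b-1) eventually
    filter_upwards [hev] with b hb
    obtain ⟨hpos', hb2⟩ := hb
    obtain ⟨m, rfl⟩ : ∃ m, b = m + 1 := ⟨b - 1, by omega⟩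
    have hm : 1 ≤ m := by omega
    have hdiff := lamB_diff μ h0 m
    have hlow := lamB_lower μ (m+1) (by omega)
    have hmono : Ipow μ m ≤ Ipow μ (m+1-2) := Ipow_mono μ (by omega)
    have hch : ((m+1).choose 2 : ℝ) = (m+1) * m / 2 := by
      rw [Nat.cast_choose_two]
      push_cast
      ring
    have hL : (0:ℝ) < lamB μ (m+1) := by linarith
    rw [div_le_iff₀ hL]
    -- need : lamB μ (m+2) ≤ (1 + 2/((m+1:ℝ)-1)) * lamB μ (m+1)
    have key : (m+1 : ℝ) * Ipow μ m ≤ (2 / (m:ℝ)) * lamB μ (m+1) := by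
      have hmpos : (0:ℝ) < m := by exact_mod_cast hm
      have h1' : ((m+1).choose 2 : ℝ) * Ipow μ (m+1-2) ≤ lamB μ (m+1) := hlow
      have h2' : (m+1 : ℝ) * Ipow μ m ≤ (m+1 : ℝ) * Ipow μ (m+1-2) :=
        mul_le_mul_of_nonneg_left hmono (by positivity)
      calc (m+1 : ℝ) * Ipow μ m ≤ (m+1 : ℝ) * Ipow μ (m+1-2) := h2'
        _ = (2 / (m:ℝ)) * (((m+1).choose 2 : ℝ) * Ipow μ (m+1-2)) := by
            rw [hch]; field_simp
        _ ≤ (2 / (m:ℝ)) * lamB μ (m+1) := by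
            apply mul_le_mul_of_nonneg_left h1' (by positivity)
    have : ((m+1:ℕ):ℝ) - 1 = (m:ℝ) := by push_cast; ring
    rw [this]
    linarith
end

section
/- One has γ_b → ∞ as b → ∞, and γ_{b+1}/γ_b → 1 as b → ∞. -/
open MeasureTheory Finset Filter

/-!
Writing `B_{b,k}(x) = C(b,k) x^k (1-x)^{b-k}` for the Bernstein basis, the integrand of `γ_b` is
`f_b(x) = Σ_{k ≥ 2} (k-1) B_{b,k}(x) / x²`, and the Bernstein identities `Σ B_{b,k} = 1`,
`Σ k B_{b,k} = b x` give `x² f_b(x) = b x - 1 + (1-x)^b`. Hence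
`f_{b+1} - f_b = (1 - (1-x)^b) / x = Σ_{j<b} (1-x)^j`, so `γ_b = Σ_{j<b} δ_j` where
`δ_j = ∫ Σ_{i<j} (1-x)^i dΛ` is subadditive in `j` and at least `Λ([0,1]) > 0` for `j ≥ 1`.
The partial sums of such a sequence grow at least linearly, and subadditivity gives
`(b+1) δ_b ≤ Σ_{j ≤ b} (δ_j + δ_{b-j}) = 2 γ_{b+1}`, so `δ_b / γ_b = O(1/b)`.
-/

open Polynomial Topology

theorem natCast_mul_le_sum_range_succ {d : ℕ → ℝ} {c : ℝ} (hd0 : 0 ≤ d 0)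
    (hc : ∀ j, 1 ≤ j → c ≤ d j) (b : ℕ) : b * c ≤ ∑ j ∈ range (b + 1), d j := by
  have h : ∑ _j ∈ range b, c ≤ ∑ j ∈ range b, d (j + 1) :=
    sum_le_sum fun j _ => hc (j + 1) (Nat.le_add_left 1 j)
  rw [sum_const, card_range, nsmul_eq_mul] at h
  rw [sum_range_succ']
  linarith

namespace Subadditive

variable {d : ℕ → ℝ}

theorem zero_nonneg (hd : Subadditive d) : 0 ≤ d 0 := by
  have h := hd 0 0
  rw [add_zero] at h
  linarith

theorem mul_le_two_mul_sum_range (hd : Subadditive d) (b : ℕ) :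
    (b + 1) * d b ≤ 2 * ∑ j ∈ range (b + 1), d j := by
  calc (b + 1 : ℝ) * d b = ∑ j ∈ range (b + 1), d (j + (b - j)) := by
        rw [sum_congr rfl fun j hj => by
          rw [Nat.add_sub_cancel' (Nat.lt_succ_iff.1 (mem_range.1 hj))]]
        simp
    _ ≤ ∑ j ∈ range (b + 1), (d j + d (b - j)) := sum_le_sum fun j _ => hd j (b - j)
    _ = 2 * ∑ j ∈ range (b + 1), d j := by
        rw [sum_add_distrib, ← sum_range_reflect d (b + 1)]
        simp only [Nat.add_sub_cancel]
        ring

theorem tendsto_sum_range_atTop_and_ratio_tendsto_one (hd : Subadditive d) {c : ℝ}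
    (hc : 0 < c) (hlow : ∀ j, 1 ≤ j → c ≤ d j) :
    Tendsto (fun b => ∑ j ∈ range b, d j) atTop atTop ∧
      Tendsto (fun b => (∑ j ∈ range (b + 1), d j) / ∑ j ∈ range b, d j) atTop (𝓝 1) := by
  set G := fun b => ∑ j ∈ range b, d j with hG
  have hd0 := hd.zero_nonneg
  have hnonneg : ∀ j, 0 ≤ d j := fun j => by
    rcases Nat.eq_zero_or_pos j with rfl | hj
    exacts [hd0, hc.le.trans (hlow j hj)]
  have hGlow : ∀ n : ℕ, n * c ≤ G (n + 1) := natCast_mul_le_sum_range_succ hd0 hlow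
  have hGpos : ∀ n : ℕ, 1 ≤ n → 0 < G (n + 1) := fun n hn =>
    (mul_pos (by exact_mod_cast hn) hc).trans_le (hGlow n)
  refine ⟨(tendsto_add_atTop_iff_nat 1).1 <|
      tendsto_atTop_mono hGlow (tendsto_natCast_atTop_atTop.atTop_mul_const hc), ?_⟩
  have hbound : ∀ n : ℕ, n * d (n + 1) ≤ 2 * G (n + 1) := fun n => by
    have h := hd.mul_le_two_mul_sum_range (n + 1)
    rw [sum_range_succ] at h
    push_cast at h
    linarith
  have hsmall : Tendsto (fun n : ℕ => d (n + 1) / G (n + 1)) atTop (𝓝 0) := by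
    refine squeeze_zero' (Eventually.of_forall fun n => div_nonneg (hnonneg _) ?_) ?_
      (tendsto_const_div_atTop_nhds_zero_nat 2)
    · exact sum_nonneg fun j _ => hnonneg j
    · filter_upwards [eventually_ge_atTop 1] with n hn
      rw [div_le_div_iff₀ (hGpos n hn) (by exact_mod_cast hn)]
      linarith [hbound n]
  refine (tendsto_add_atTop_iff_nat 1).1 ?_
  simpa using (hsmall.const_add 1).congr' <| by
    filter_upwards [eventually_ge_atTop 1] with n hn
    rw [hG, sum_range_succ _ (n + 1), add_div, div_self (hGpos n hn).ne']

end Subadditive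

theorem one_le_geom_sum {y : ℝ} (hy : 0 ≤ y) {b : ℕ} (hb : 1 ≤ b) :
    1 ≤ ∑ j ∈ range b, y ^ j := by
  simpa using single_le_sum (fun j _ => pow_nonneg hy j) (mem_range.2 hb)

theorem geom_sum_range_add_le {y : ℝ} (hy0 : 0 ≤ y) (hy1 : y ≤ 1) (a b : ℕ) :
    ∑ j ∈ range (a + b), y ^ j ≤ ∑ j ∈ range a, y ^ j + ∑ j ∈ range b, y ^ j := by
  rw [sum_range_add]
  exact add_le_add le_rfl
    (sum_le_sum fun j _ => pow_le_pow_of_le_one hy0 hy1 (Nat.le_add_left j a))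

theorem sum_range_sub_one_mul_bernsteinPolynomial_eval (b : ℕ) (x : ℝ) :
    ∑ k ∈ range (b + 1), ((k : ℝ) - 1) * (bernsteinPolynomial ℝ b k).eval x = b * x - 1 := by
  have h1 := congrArg (eval x) (bernsteinPolynomial.sum ℝ b)
  have h2 := congrArg (eval x) (bernsteinPolynomial.sum_smul ℝ b)
  simp only [eval_finsetSum, nsmul_eq_mul, eval_natCast_mul, eval_one, eval_X] at h1 h2
  simp only [sub_mul, one_mul, sum_sub_distrib, h1, h2]

noncomputable def gamIntegrand (b : ℕ) (x : ℝ) : ℝ :=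
  ∑ k ∈ Icc 2 b, (b.choose k : ℝ) * ((k : ℝ) - 1) * (x ^ (k - 2) * (1 - x) ^ (b - k))

theorem continuous_gamIntegrand (b : ℕ) : Continuous (gamIntegrand b) := by
  unfold gamIntegrand
  fun_prop

theorem sq_mul_gamIntegrand (b : ℕ) (x : ℝ) :
    x ^ 2 * gamIntegrand b x = b * x - 1 + (1 - x) ^ b := by
  obtain rfl | hb := Nat.eq_zero_or_pos b
  · simp [gamIntegrand]
  have hterm : ∀ k ∈ Icc 2 b,
      x ^ 2 * ((b.choose k : ℝ) * ((k : ℝ) - 1) * (x ^ (k - 2) * (1 - x) ^ (b - k)))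
        = ((k : ℝ) - 1) * (bernsteinPolynomial ℝ b k).eval x := fun k hk => by
    simp only [bernsteinPolynomial, eval_mul, eval_natCast, eval_pow, eval_sub, eval_one, eval_X]
    rw [← Nat.add_sub_cancel' (mem_Icc.1 hk).1, pow_add, Nat.add_sub_cancel_left]
    ring
  rw [← sum_range_sub_one_mul_bernsteinPolynomial_eval, range_eq_Ico,
    ← sum_Ico_consecutive _ (Nat.zero_le 2) (by omega), Ico_add_one_right_eq_Icc,
    gamIntegrand, mul_sum, sum_congr rfl hterm]
  simp [bernsteinPolynomial, sum_range_succ]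

theorem gamIntegrand_succ (b : ℕ) :
    gamIntegrand (b + 1) = fun x => gamIntegrand b x + ∑ j ∈ range b, (1 - x) ^ j := by
  refine (continuous_gamIntegrand _).ext_on (dense_compl_singleton 0)
    ((continuous_gamIntegrand b).add (by fun_prop)) fun x hx => ?_
  refine mul_left_cancel₀ (pow_ne_zero 2 hx) ?_
  have hgeom := geom_sum_mul (1 - x) b
  simp only [mul_add, sq_mul_gamIntegrand]
  push_cast
  linear_combination x * hgeom

section Measure

variable (μ : Measure ℝ) [IsLocallyFiniteMeasure μ]

noncomputable def gamIncr (b : ℕ) : ℝ :=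
  ∫ x in Set.Icc (0 : ℝ) 1, ∑ j ∈ range b, (1 - x) ^ j ∂μ

theorem integrableOn_geom_sum (b : ℕ) :
    IntegrableOn (fun x : ℝ => ∑ j ∈ range b, (1 - x) ^ j) (Set.Icc 0 1) μ :=
  Continuous.integrableOn_Icc (by fun_prop)

theorem gamB_eq_integral (b : ℕ) :
    gamB μ b = ∫ x in Set.Icc (0 : ℝ) 1, gamIntegrand b x ∂μ := by
  unfold gamB gamIntegrand lamBK
  rw [integral_finsetSum _ fun k _ => Continuous.integrableOn_Icc (by fun_prop)]
  simp only [integral_const_mul]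

theorem gamB_succ (b : ℕ) : gamB μ (b + 1) = gamB μ b + gamIncr μ b := by
  rw [gamB_eq_integral, gamB_eq_integral, gamIntegrand_succ, gamIncr,
    integral_add ((continuous_gamIntegrand b).integrableOn_Icc) (integrableOn_geom_sum μ b)]

theorem gamB_eq_sum_range : gamB μ = fun b => ∑ j ∈ range b, gamIncr μ j := by
  funext b
  induction b with
  | zero => simp [gamB]
  | succ n ih => rw [gamB_succ, ih, sum_range_succ]

theorem subadditive_gamIncr : Subadditive (gamIncr μ) := fun a b => by
  rw [gamIncr, gamIncr, gamIncr,
    ← integral_add (integrableOn_geom_sum μ a) (integrableOn_geom_sum μ b)]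
  exact setIntegral_mono_on (integrableOn_geom_sum μ _)
    ((integrableOn_geom_sum μ a).add (integrableOn_geom_sum μ b)) measurableSet_Icc
    fun x hx => geom_sum_range_add_le (by linarith [hx.2]) (by linarith [hx.1]) a b

theorem measureReal_Icc_le_gamIncr {b : ℕ} (hb : 1 ≤ b) :
    μ.real (Set.Icc 0 1) ≤ gamIncr μ b := by
  rw [← mul_one (μ.real _), ← smul_eq_mul, ← setIntegral_const]
  exact setIntegral_mono_on continuous_const.integrableOn_Icc (integrableOn_geom_sum μ b)
    measurableSet_Icc fun x hx => one_le_geom_sum (by linarith [hx.2]) hb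

end Measure

theorem gamB_tendsto_atTop_and_ratio_tendsto_one_general (μ : Measure ℝ) [IsFiniteMeasure μ]
    (hpos : 0 < μ (Set.Icc (0:ℝ) 1)) :
    Tendsto (fun b : ℕ => gamB μ b) atTop atTop ∧
      Tendsto (fun b : ℕ => gamB μ (b + 1) / gamB μ b) atTop (nhds 1) := by
  have hmass : 0 < μ.real (Set.Icc 0 1) := ENNReal.toReal_pos hpos.ne' (measure_ne_top μ _)
  simpa only [gamB_eq_sum_range] using
    (subadditive_gamIncr μ).tendsto_sum_range_atTop_and_ratio_tendsto_one hmass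
      fun _ => measureReal_Icc_le_gamIncr μ

theorem gamB_tendsto_atTop_and_ratio_tendsto_one (μ : Measure ℝ) [IsFiniteMeasure μ]
    (h0 : μ {0} = 0) (h1 : μ {1} = 0)
    (hsupp : μ ((Set.Icc (0:ℝ) 1)ᶜ) = 0) (hpos : 0 < μ (Set.Icc (0:ℝ) 1)) :
    Tendsto (fun b : ℕ => gamB μ b) atTop atTop ∧
      Tendsto (fun b : ℕ => gamB μ (b + 1) / gamB μ b) atTop (nhds 1) :=
  gamB_tendsto_atTop_and_ratio_tendsto_one_general μ hpos
end
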